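/- In the Cadzow iteration for rank-1 Hankel approximation, the sequence of largest singular values (σ_j) is monotonically nonincreasing: σ_{j+1} = ‖P(σ_j·u_j·v_j^*)‖₂ ≤ σ_j, where u_j, v_j are unit vectors. Moreover, the inequality is strict unless u_j·v_j^* is a Hankel matrix. -/

import Mathlib

/-!
The spectral norm is bounded by the Frobenius norm, and `σ • u v*` has Frobenius norm `σ`.
The Hankel projection replaces the entries on each antidiagonal by their mean `ā`, and on an
antidiagonal with `n` entries `∑ |aᵢ|² = ∑ |aᵢ - ā|² + n |ā|²`. Hence the projection does not
increase the Frobenius norm, and decreases it strictly as soon as some antidiagonal of the matrix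
is not constant, i.e. as soon as the matrix is not Hankel.
-/

open Matrix Finset

noncomputable def hproj {M N : ℕ} (A : Matrix (Fin M) (Fin N) ℂ) :
    Matrix (Fin M) (Fin N) ℂ :=
  fun k l =>
    (∑ p ∈ Finset.univ.filter
        (fun p : Fin M × Fin N => (p.1 : ℕ) + (p.2 : ℕ) = (k : ℕ) + (l : ℕ)), A p.1 p.2) /
      ((Finset.univ.filter
        (fun p : Fin M × Fin N => (p.1 : ℕ) + (p.2 : ℕ) = (k : ℕ) + (l : ℕ))).card : ℂ)

noncomputable def cvnorm {ι : Type*} [Fintype ι] (x : ι → ℂ) : ℝ :=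
  Real.sqrt (∑ i, ‖x i‖ ^ 2)

/-- Spectral norm (largest singular value) of a complex matrix. -/
noncomputable def cspecNorm {M N : ℕ} (A : Matrix (Fin M) (Fin N) ℂ) : ℝ :=
  sSup {r : ℝ | ∃ x : Fin N → ℂ, cvnorm x = 1 ∧ r = cvnorm (A.mulVec x)}

def IsHankel {M N : ℕ} (A : Matrix (Fin M) (Fin N) ℂ) : Prop :=
  ∀ (k m : Fin M) (l n : Fin N), (k : ℕ) + (l : ℕ) = (m : ℕ) + (n : ℕ) → A k l = A m n

open scoped BigOperators

section Mean

variable {ι : Type*} (S : Finset ι) (f : ι → ℂ)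

lemma sum_norm_sq_eq_sum_norm_sq_sub_expect_add :
    ∑ i ∈ S, ‖f i‖ ^ 2
      = ∑ i ∈ S, ‖f i - 𝔼 j ∈ S, f j‖ ^ 2 + S.card * ‖𝔼 j ∈ S, f j‖ ^ 2 := by
  set c := 𝔼 j ∈ S, f j
  have hexpand : ∀ i, ‖f i‖ ^ 2
      = ‖f i - c‖ ^ 2 + ‖c‖ ^ 2 + 2 * ((f i - c) * starRingEnd ℂ c).re := by
    intro i
    simpa only [sub_add_cancel, Complex.sq_norm] using Complex.normSq_add (f i - c) c
  have hcross : ∑ i ∈ S, ((f i - c) * starRingEnd ℂ c).re = 0 := by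
    have hdev : ∑ i ∈ S, (f i - c) = 0 := by
      rw [sum_sub_distrib, sum_const, card_smul_expect, sub_self]
    rw [← Complex.re_sum, ← sum_mul, hdev, zero_mul, Complex.zero_re]
  simp only [hexpand, sum_add_distrib, ← mul_sum, hcross, sum_const, nsmul_eq_mul]
  ring

lemma card_mul_norm_sq_expect_le : S.card * ‖𝔼 j ∈ S, f j‖ ^ 2 ≤ ∑ i ∈ S, ‖f i‖ ^ 2 := by
  rw [sum_norm_sq_eq_sum_norm_sq_sub_expect_add S f]
  exact le_add_of_nonneg_left (by positivity)

lemma card_mul_norm_sq_expect_lt {i j : ι} (hi : i ∈ S) (hj : j ∈ S) (hne : f i ≠ f j) :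
    S.card * ‖𝔼 j ∈ S, f j‖ ^ 2 < ∑ i ∈ S, ‖f i‖ ^ 2 := by
  rw [sum_norm_sq_eq_sum_norm_sq_sub_expect_add S f]
  refine lt_add_of_pos_left _ (sum_pos' (fun _ _ => by positivity) ?_)
  obtain ⟨k, hk, hkne⟩ : ∃ k ∈ S, f k ≠ 𝔼 j ∈ S, f j := by
    by_contra! h
    exact hne ((h i hi).trans (h j hj).symm)
  have : f k - 𝔼 j ∈ S, f j ≠ 0 := sub_ne_zero.mpr hkne
  exact ⟨k, hk, by positivity⟩

end Mean

section Frobenius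

variable {M N : ℕ}

def antidiag (M N d : ℕ) : Finset (Fin M × Fin N) :=
  univ.filter fun p => (p.1 : ℕ) + (p.2 : ℕ) = d

lemma hproj_apply (A : Matrix (Fin M) (Fin N) ℂ) (k : Fin M) (l : Fin N) :
    hproj A k l = 𝔼 p ∈ antidiag M N (k + l), A p.1 p.2 :=
  (expect_eq_sum_div_card _ _).symm

noncomputable def frobNormSq (A : Matrix (Fin M) (Fin N) ℂ) : ℝ :=
  ∑ k, ∑ l, ‖A k l‖ ^ 2

lemma frobNormSq_nonneg (A : Matrix (Fin M) (Fin N) ℂ) : 0 ≤ frobNormSq A := by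
  unfold frobNormSq
  positivity

lemma frobNormSq_eq_sum_antidiag (A : Matrix (Fin M) (Fin N) ℂ) :
    frobNormSq A = ∑ d ∈ range (M + N), ∑ p ∈ antidiag M N d, ‖A p.1 p.2‖ ^ 2 := by
  rw [frobNormSq, ← Fintype.sum_prod_type']
  refine (sum_fiberwise_of_maps_to (fun p _ => ?_) _).symm
  simp only [mem_range]
  omega

lemma frobNormSq_hproj_eq (A : Matrix (Fin M) (Fin N) ℂ) :
    frobNormSq (hproj A) = ∑ d ∈ range (M + N),
      (antidiag M N d).card * ‖𝔼 p ∈ antidiag M N d, A p.1 p.2‖ ^ 2 := by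
  rw [frobNormSq_eq_sum_antidiag]
  refine sum_congr rfl fun d _ => ?_
  rw [← nsmul_eq_mul, ← sum_const]
  refine sum_congr rfl fun p hp => ?_
  rw [hproj_apply, (mem_filter.mp hp).2]

lemma frobNormSq_hproj_le (A : Matrix (Fin M) (Fin N) ℂ) :
    frobNormSq (hproj A) ≤ frobNormSq A := by
  rw [frobNormSq_hproj_eq, frobNormSq_eq_sum_antidiag]
  exact sum_le_sum fun d _ => card_mul_norm_sq_expect_le _ _

lemma frobNormSq_hproj_lt (A : Matrix (Fin M) (Fin N) ℂ) (hA : ¬ IsHankel A) :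
    frobNormSq (hproj A) < frobNormSq A := by
  simp only [IsHankel, not_forall] at hA
  obtain ⟨k, m, l, n, hkl, hne⟩ := hA
  rw [frobNormSq_hproj_eq, frobNormSq_eq_sum_antidiag]
  have hd : (k : ℕ) + l ∈ range (M + N) := mem_range.mpr (by omega)
  refine sum_lt_sum (fun d _ => card_mul_norm_sq_expect_le _ _) ⟨_, hd, ?_⟩
  exact card_mul_norm_sq_expect_lt (antidiag M N (k + l)) (fun p => A p.1 p.2)
    (i := (k, l)) (j := (m, n))
    (mem_filter.mpr ⟨mem_univ _, rfl⟩) (mem_filter.mpr ⟨mem_univ _, hkl.symm⟩) hne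

lemma cvnorm_mulVec_le (A : Matrix (Fin M) (Fin N) ℂ) (x : Fin N → ℂ) :
    cvnorm (A *ᵥ x) ≤ √(frobNormSq A) * cvnorm x := by
  rw [cvnorm, cvnorm, ← Real.sqrt_mul (frobNormSq_nonneg A), frobNormSq, sum_mul]
  refine Real.sqrt_le_sqrt (sum_le_sum fun k _ => ?_)
  calc ‖(A *ᵥ x) k‖ ^ 2 ≤ (∑ l, ‖A k l‖ * ‖x l‖) ^ 2 := by
        gcongr
        simpa only [mulVec, dotProduct, norm_mul] using
          norm_sum_le univ fun l => A k l * x l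
    _ ≤ (∑ l, ‖A k l‖ ^ 2) * ∑ l, ‖x l‖ ^ 2 := sum_mul_sq_le_sq_mul_sq _ _ _

lemma cspecNorm_le_sqrt_frobNormSq (A : Matrix (Fin M) (Fin N) ℂ) :
    cspecNorm A ≤ √(frobNormSq A) := by
  refine Real.sSup_le ?_ (Real.sqrt_nonneg _)
  rintro r ⟨x, hx, rfl⟩
  simpa [hx] using cvnorm_mulVec_le A x

lemma frobNormSq_smul_vecMulVec (c : ℂ) (u : Fin M → ℂ) (v : Fin N → ℂ) :
    frobNormSq (c • vecMulVec u (star v)) = (‖c‖ * cvnorm u * cvnorm v) ^ 2 := by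
  simp only [frobNormSq, cvnorm, mul_pow, Real.sq_sqrt (sum_nonneg fun _ _ => sq_nonneg _),
    Matrix.smul_apply, vecMulVec_apply, Pi.star_apply, smul_eq_mul, norm_mul, norm_star,
    mul_sum, sum_mul, mul_assoc]
  exact sum_comm

lemma IsHankel.of_smul {A : Matrix (Fin M) (Fin N) ℂ} {c : ℂ} (hc : c ≠ 0)
    (hA : IsHankel (c • A)) : IsHankel A :=
  fun k m l n h => mul_left_cancel₀ hc (hA k m l n h)

end Frobenius

theorem stmt18_general (M N : ℕ)
    (u : Fin M → ℂ) (v : Fin N → ℂ) (hu : cvnorm u = 1) (hv : cvnorm v = 1)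
    (σ : ℝ) (hσ : 0 < σ) :
    cspecNorm (hproj ((σ : ℂ) • vecMulVec u (star v))) ≤ σ ∧
    (¬ IsHankel (vecMulVec u (star v)) →
      cspecNorm (hproj ((σ : ℂ) • vecMulVec u (star v))) < σ) := by
  set A := (σ : ℂ) • vecMulVec u (star v)
  have hA : √(frobNormSq A) = σ := by
    rw [frobNormSq_smul_vecMulVec, hu, hv, Complex.norm_real, Real.norm_of_nonneg hσ.le,
      mul_one, mul_one, Real.sqrt_sq hσ.le]
  refine ⟨(cspecNorm_le_sqrt_frobNormSq _).trans ?_, fun hnh =>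
    (cspecNorm_le_sqrt_frobNormSq _).trans_lt ?_⟩
  · exact hA ▸ Real.sqrt_le_sqrt (frobNormSq_hproj_le A)
  · have hAnh : ¬ IsHankel A := fun h => hnh (h.of_smul (by exact_mod_cast hσ.ne'))
    exact hA ▸ Real.sqrt_lt_sqrt (frobNormSq_nonneg _) (frobNormSq_hproj_lt A hAnh)

/-- One Cadzow step does not increase the largest singular value:
`σ_{j+1} = ‖P(σ_j u_j v_j^*)‖₂ ≤ σ_j`, strictly unless `u_j v_j^*` is Hankel. -/
theorem stmt18 (M N : ℕ) (hM : 2 ≤ M) (hMN : M ≤ N)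
    (u : Fin M → ℂ) (v : Fin N → ℂ) (hu : cvnorm u = 1) (hv : cvnorm v = 1)
    (σ : ℝ) (hσ : 0 < σ) :
    cspecNorm (hproj ((σ : ℂ) • vecMulVec u (star v))) ≤ σ ∧
    (¬ IsHankel (vecMulVec u (star v)) →
      cspecNorm (hproj ((σ : ℂ) • vecMulVec u (star v))) < σ) :=
  stmt18_general M N u v hu hv σ hσ
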